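/- Pfaffian formula for $\beta = 4$: Let $N \geq 1$, $\nu$ a finite Borel measure on $\mathbb R$ with all moments finite, and $(p_n)_{n=1}^{2N}$ monic polynomials with $\deg p_n = n-1$. Define the antisymmetric matrix $\mathbf W = \left[\int_{\mathbb R}\big(p_m(x)p_n'(x) - p_m'(x)p_n(x)\big)\, d\nu(x)\right]_{m,n=1}^{2N}$. Then $\frac{1}{N!}\int_{\mathbb R^N}\prod_{m<n}(\lambda_n - \lambda_m)^4\, d\nu^N(\boldsymbol\lambda) = \mathrm{Pf}\,\mathbf W$. -/

import Mathlib

/-!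
The integrand `∏_{i<j} (x_j - x_i)^4` is the determinant of the confluent Vandermonde matrix whose
columns are `(p_m(x_i))_m` and `(p_m'(x_i))_m`. Indeed, for `t ≠ 0` column operations turn the
Vandermonde matrix at the doubled nodes `x_i, x_i + t` into `t^N` times the matrix of difference
quotients, whose determinant is therefore `∏_{i<j}` of the four differences between the nodes of
pairs `i` and `j`; letting `t → 0` gives the claim. Expanding the determinant over permutations,
every term is a product of functions of one variable each, so Fubini turns its integral into
`∑_σ sgn σ ∏_i a_{σ(2i),σ(2i+1)}` with `a_{mn} = ∫ p_m p_n' dν`. Since `W = a - aᵀ`, expanding the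
product and reordering each pair inside `σ` shows that the same sum for `W` is `2^N` times this
one, and it is `2^N N! Pf W` by definition.
-/

open MeasureTheory

/-- The Pfaffian of a `2N × 2N` real matrix. -/
noncomputable def pf {N : ℕ} (A : Matrix (Fin (2*N)) (Fin (2*N)) ℝ) : ℝ :=
  (1 / (2^N * (Nat.factorial N) : ℝ)) *
    ∑ σ : Equiv.Perm (Fin (2*N)), ((Equiv.Perm.sign σ : ℤ) : ℝ) *
      ∏ m : Fin N,
        A (σ ⟨2*(m:ℕ), by have := m.isLt; omega⟩) (σ ⟨2*(m:ℕ)+1, by have := m.isLt; omega⟩)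

open Finset Polynomial Equiv

def pairEquiv (N : ℕ) : Fin 2 × Fin N ≃ Fin (2 * N) :=
  (Equiv.prodComm _ _).trans (finProdFinEquiv.trans (finCongr (Nat.mul_comm N 2)))

namespace pairEquiv

variable {N : ℕ}

@[simp]
lemma apply_val (b : Fin 2) (i : Fin N) : (pairEquiv N (b, i) : ℕ) = 2 * i + b := by
  simp [pairEquiv, add_comm, mul_comm]

lemma lt_iff {b b' : Fin 2} {i j : Fin N} :
    pairEquiv N (b, i) < pairEquiv N (b', j) ↔ i < j ∨ i = j ∧ b < b' := by
  rw [Fin.lt_def, apply_val, apply_val, Fin.lt_def, Fin.lt_def, Fin.ext_iff]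
  omega

lemma prod_Ioi {M : Type*} [CommMonoid M] (f : Fin (2 * N) → Fin (2 * N) → M) :
    ∏ c, ∏ c' ∈ Ioi c, f c c' =
      ∏ i, (f (pairEquiv N (0, i)) (pairEquiv N (1, i)) *
        ∏ j ∈ Ioi i, ∏ b, ∏ b', f (pairEquiv N (b, i)) (pairEquiv N (b', j))) := by
  have hblock (i j : Fin N) : ∏ b, ∏ b', (if pairEquiv N (b, i) < pairEquiv N (b', j)
      then f (pairEquiv N (b, i)) (pairEquiv N (b', j)) else 1) =
      if i < j then ∏ b, ∏ b', f (pairEquiv N (b, i)) (pairEquiv N (b', j))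
      else if i = j then f (pairEquiv N (0, i)) (pairEquiv N (1, i)) else 1 := by
    rcases lt_trichotomy i j with h | rfl | h
    · simp [lt_iff, h]
    · simp [lt_iff, Fin.prod_univ_two]
    · simp [lt_iff, h.not_gt, h.ne']
  simp_rw [← filter_lt_eq_Ioi, prod_filter]
  rw [← (pairEquiv N).prod_comp, Fintype.prod_prod_type, prod_comm]
  refine prod_congr rfl fun i _ => ?_
  simp_rw [← (pairEquiv N).prod_comp, Fintype.prod_prod_type]
  rw [prod_congr rfl fun b _ => prod_comm, prod_comm]
  have hdiag (j : Fin N) (F : M) : (if i < j then F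
      else if i = j then f (pairEquiv N (0, i)) (pairEquiv N (1, i)) else 1) =
      (if i = j then f (pairEquiv N (0, j)) (pairEquiv N (1, j)) else 1) *
        if i < j then F else 1 := by
    rcases lt_trichotomy i j with h | rfl | h
    · simp [h, h.ne]
    · simp
    · simp [h.not_gt, h.ne']
  simp_rw [hblock, hdiag, prod_mul_distrib, Fintype.prod_ite_eq]

end pairEquiv

section CommRing

variable {R : Type*} [CommRing R] {N : ℕ}

def pairedPoints (x : Fin N → R) (t : R) (c : Fin (2 * N)) : R :=
  x ((pairEquiv N).symm c).2 + (((pairEquiv N).symm c).1 : ℕ) * t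

lemma prod_pairedPoints (x : Fin N → R) (t : R) :
    ∏ c, ∏ c' ∈ Ioi c, (pairedPoints x t c' - pairedPoints x t c) =
      t ^ N * ∏ i, ∏ j ∈ Ioi i, ∏ b : Fin 2, ∏ b' : Fin 2,
        (x j + (b' : ℕ) * t - (x i + (b : ℕ) * t)) := by
  rw [pairEquiv.prod_Ioi, prod_mul_distrib]
  simp [pairedPoints]

noncomputable def confluentVandermonde (p : Fin (2 * N) → R[X]) (x : Fin N → R) :
    Matrix (Fin (2 * N)) (Fin (2 * N)) R :=
  Matrix.of fun m c =>
    (derivative^[((pairEquiv N).symm c).1] (p m)).eval (x ((pairEquiv N).symm c).2)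

lemma det_confluentVandermonde_eq_sum (p : Fin (2 * N) → R[X]) (x : Fin N → R) :
    (confluentVandermonde p x).det = ∑ σ : Perm (Fin (2 * N)), (Perm.sign σ : R) *
      ∏ i, (p (σ (pairEquiv N (0, i)))).eval (x i) *
        (derivative (p (σ (pairEquiv N (1, i))))).eval (x i) := by
  rw [Matrix.det_apply']
  refine sum_congr rfl fun σ _ => ?_
  rw [← (pairEquiv N).prod_comp, Fintype.prod_prod_type, Fin.prod_univ_two, ← prod_mul_distrib]
  simp [confluentVandermonde]

end CommRing

/-- Right multiplication by `pairColumnOp 𝕜 N t` replaces column `2i + 1` by its difference with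
column `2i`, divided by `t`. -/
noncomputable def pairColumnOp (𝕜 : Type*) [Field 𝕜] (N : ℕ) (t : 𝕜) :
    Matrix (Fin (2 * N)) (Fin (2 * N)) 𝕜 :=
  (Matrix.blockDiagonal fun _ : Fin N => !![1, -t⁻¹; 0, t⁻¹]).submatrix
    (pairEquiv N).symm (pairEquiv N).symm

lemma det_pairColumnOp {𝕜 : Type*} [Field 𝕜] {N : ℕ} (t : 𝕜) :
    (pairColumnOp 𝕜 N t).det = t⁻¹ ^ N := by
  simp [pairColumnOp, Matrix.det_submatrix_equiv_self, Matrix.det_blockDiagonal,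
    Matrix.det_fin_two_of]

section ConfluentVandermonde

variable {𝕜 : Type*} [NontriviallyNormedField 𝕜] {N : ℕ}

noncomputable def dslopeMatrix (p : Fin (2 * N) → 𝕜[X]) (x : Fin N → 𝕜) (t : 𝕜) :
    Matrix (Fin (2 * N)) (Fin (2 * N)) 𝕜 :=
  Matrix.of fun m c =>
    let i := ((pairEquiv N).symm c).2
    if ((pairEquiv N).symm c).1 = 0 then (p m).eval (x i)
    else dslope (fun y => (p m).eval y) (x i) (x i + t)

variable (p : Fin (2 * N) → 𝕜[X]) (x : Fin N → 𝕜)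

lemma dslopeMatrix_zero : dslopeMatrix p x 0 = confluentVandermonde p x := by
  ext m c
  obtain ⟨⟨b, i⟩, rfl⟩ := (pairEquiv N).surjective c
  fin_cases b <;> simp [dslopeMatrix, confluentVandermonde, dslope_same, Polynomial.deriv]

lemma continuousAt_dslopeMatrix : ContinuousAt (dslopeMatrix p x) 0 := by
  refine continuousAt_pi.2 fun m => continuousAt_pi.2 fun c => ?_
  simp only [dslopeMatrix, Matrix.of_apply]
  split_ifs
  · exact continuousAt_const
  · refine ContinuousAt.comp_of_eq ?_ (by fun_prop) (add_zero _)
    exact continuousAt_dslope_same.2 (Polynomial.differentiableAt _)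

lemma dslopeMatrix_eq_mul {t : 𝕜} (ht : t ≠ 0) :
    dslopeMatrix p x t =
      (Matrix.of fun m c => (p m).eval (pairedPoints x t c)) * pairColumnOp 𝕜 N t := by
  ext m c
  obtain ⟨⟨b, i⟩, rfl⟩ := (pairEquiv N).surjective c
  rw [Matrix.mul_apply, ← (pairEquiv N).sum_comp, Fintype.sum_prod_type]
  fin_cases b <;> simp [dslopeMatrix, pairColumnOp, pairedPoints, Matrix.blockDiagonal_apply,
    Fin.sum_univ_two, dslope_of_ne _ (add_ne_left.2 ht), slope_def_field, neg_add_eq_sub, sub_mul,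
    div_eq_mul_inv]

lemma det_dslopeMatrix (hdeg : ∀ m, (p m).natDegree = m) (hmonic : ∀ m, (p m).Monic)
    {t : 𝕜} (ht : t ≠ 0) :
    (dslopeMatrix p x t).det = ∏ i, ∏ j ∈ Ioi i, ∏ b : Fin 2, ∏ b' : Fin 2,
        (x j + (b' : ℕ) * t - (x i + (b : ℕ) * t)) := by
  have hT : (Matrix.of fun m c => (p m).eval (pairedPoints x t c)) =
      (Matrix.of fun c m => (p m).eval (pairedPoints x t c)).transpose := rfl
  rw [dslopeMatrix_eq_mul p x ht, Matrix.det_mul, det_pairColumnOp, hT, Matrix.det_transpose,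
    ← Matrix.det_eval_matrixOfPolynomials_eq_det_vandermonde _ p hdeg hmonic,
    Matrix.det_vandermonde, prod_pairedPoints, mul_right_comm, ← mul_pow, mul_inv_cancel₀ ht,
    one_pow, one_mul]

open Filter Topology in
theorem det_confluentVandermonde (hdeg : ∀ m, (p m).natDegree = m)
    (hmonic : ∀ m, (p m).Monic) :
    (confluentVandermonde p x).det = ∏ i, ∏ j ∈ Ioi i, (x j - x i) ^ 4 := by
  let Q : 𝕜 → 𝕜 := fun t => ∏ i, ∏ j ∈ Ioi i, ∏ b : Fin 2, ∏ b' : Fin 2,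
    (x j + (b' : ℕ) * t - (x i + (b : ℕ) * t))
  have hdet : Tendsto (fun t => (dslopeMatrix p x t).det) (𝓝[≠] 0)
      (𝓝 (confluentVandermonde p x).det) := by
    rw [← dslopeMatrix_zero]
    exact (continuous_id.matrix_det.continuousAt.comp (continuousAt_dslopeMatrix p x)).tendsto
      |>.mono_left nhdsWithin_le_nhds
  have hQ : Tendsto Q (𝓝[≠] 0) (𝓝 (Q 0)) :=
    (Continuous.tendsto (by fun_prop) 0).mono_left nhdsWithin_le_nhds
  have heq : (fun t => (dslopeMatrix p x t).det) =ᶠ[𝓝[≠] 0] Q :=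
    eventually_nhdsWithin_of_forall fun t ht => det_dslopeMatrix p x hdeg hmonic ht
  rw [tendsto_nhds_unique (hdet.congr' heq) hQ]
  simp only [Q, Fin.prod_univ_two]
  refine prod_congr rfl fun i _ => prod_congr rfl fun j _ => ?_
  simp only [Fin.val_zero, Fin.val_one, Nat.cast_zero, Nat.cast_one, zero_mul, one_mul, add_zero]
  ring

end ConfluentVandermonde

section PairedSum

variable {N : ℕ} {R : Type*} [CommRing R]

def pairedSum (A : Matrix (Fin (2 * N)) (Fin (2 * N)) R) : R :=
  ∑ σ : Perm (Fin (2 * N)), (Perm.sign σ : R) *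
    ∏ i, A (σ (pairEquiv N (0, i))) (σ (pairEquiv N (1, i)))

def flipPairs (T : Finset (Fin N)) : Perm (Fin (2 * N)) :=
  (pairEquiv N).permCongr (prodCongrLeft fun i => if i ∈ T then swap 0 1 else 1)

lemma flipPairs_apply (T : Finset (Fin N)) (b : Fin 2) (i : Fin N) :
    flipPairs T (pairEquiv N (b, i)) = pairEquiv N (if i ∈ T then swap 0 1 b else b, i) := by
  by_cases hi : i ∈ T <;> simp [flipPairs, permCongr_apply, hi]

lemma sign_flipPairs (T : Finset (Fin N)) : Perm.sign (flipPairs T) = (-1) ^ T.card := by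
  simp [flipPairs, Perm.sign_prodCongrLeft, apply_ite, prod_ite_mem]

lemma pairedSum_sub_transpose (A : Matrix (Fin (2 * N)) (Fin (2 * N)) R) :
    pairedSum (A - A.transpose) = 2 ^ N * pairedSum A := by
  have hterm (T : Finset (Fin N)) : ∑ σ : Perm (Fin (2 * N)), (Perm.sign σ : R) *
      ((∏ i ∈ T, A (σ (pairEquiv N (0, i))) (σ (pairEquiv N (1, i)))) *
        ∏ i ∈ Tᶜ, -A (σ (pairEquiv N (1, i))) (σ (pairEquiv N (0, i)))) = pairedSum A := by
    -- precomposing with the flip of the pairs in `Tᶜ` produces the same sign `(-1) ^ #Tᶜ` twice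
    refine Fintype.sum_equiv (Equiv.mulRight (flipPairs Tᶜ)) _ _ fun σ => ?_
    have hsign : (Perm.sign (σ * flipPairs Tᶜ) : R) = Perm.sign σ * (-1) ^ Tᶜ.card := by
      simp [sign_flipPairs]
    have hprod : ∏ i, A ((σ * flipPairs Tᶜ) (pairEquiv N (0, i)))
        ((σ * flipPairs Tᶜ) (pairEquiv N (1, i))) =
        (∏ i ∈ T, A (σ (pairEquiv N (0, i))) (σ (pairEquiv N (1, i)))) *
          ∏ i ∈ Tᶜ, A (σ (pairEquiv N (1, i))) (σ (pairEquiv N (0, i))) := by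
      rw [← prod_mul_prod_compl T]
      congr 1 <;> refine prod_congr rfl fun i hi => ?_ <;> simp_all [flipPairs_apply]
    rw [coe_mulRight, hsign, hprod, prod_neg]
    ring
  calc pairedSum (A - A.transpose)
      = ∑ T ∈ univ.powerset, ∑ σ : Perm (Fin (2 * N)), (Perm.sign σ : R) *
          ((∏ i ∈ T, A (σ (pairEquiv N (0, i))) (σ (pairEquiv N (1, i)))) *
            ∏ i ∈ Tᶜ, -A (σ (pairEquiv N (1, i))) (σ (pairEquiv N (0, i)))) := by
        simp_rw [pairedSum, Matrix.sub_apply, Matrix.transpose_apply, sub_eq_add_neg, prod_add,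
          ← compl_eq_univ_sdiff, mul_sum]
        exact sum_comm
    _ = 2 ^ N * pairedSum A := by
        simp_rw [hterm]
        simp

end PairedSum

lemma pf_eq_pairedSum {N : ℕ} (A : Matrix (Fin (2 * N)) (Fin (2 * N)) ℝ) :
    pf A = pairedSum A / (2 ^ N * N.factorial) := by
  rw [pf, pairedSum, one_div_mul_eq_div]
  congr! with σ _ i
  all_goals simp

lemma pf_sub_transpose {N : ℕ} (A : Matrix (Fin (2 * N)) (Fin (2 * N)) ℝ) :
    pf (A - A.transpose) = pairedSum A / N.factorial := by
  rw [pf_eq_pairedSum, pairedSum_sub_transpose, mul_div_mul_left _ _ (by positivity)]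

lemma integrable_eval_of_integrable_pow {ν : Measure ℝ}
    (hmom : ∀ k : ℕ, Integrable (fun x => x ^ k) ν) (q : ℝ[X]) :
    Integrable (fun x => q.eval x) ν := by
  simp_rw [eval_eq_sum_range]
  exact integrable_finsetSum _ fun k _ => (hmom k).const_mul _

lemma integral_det_confluentVandermonde {N : ℕ} (p : Fin (2 * N) → ℝ[X]) (ν : Measure ℝ)
    [SigmaFinite ν]
    (hint : ∀ m n, Integrable (fun y => (p m).eval y * (derivative (p n)).eval y) ν) :
    ∫ x, (confluentVandermonde p x).det ∂(Measure.pi fun _ => ν) =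
      pairedSum (Matrix.of fun m n => ∫ y, (p m).eval y * (derivative (p n)).eval y ∂ν) := by
  simp_rw [det_confluentVandermonde_eq_sum]
  rw [integral_finsetSum _ fun σ _ => (Integrable.fintype_prod fun i => hint _ _).const_mul _]
  refine sum_congr rfl fun σ _ => ?_
  rw [integral_const_mul]
  exact congrArg _ (integral_fintype_prod_eq_prod fun i y =>
    (p (σ (pairEquiv N (0, i)))).eval y * (derivative (p (σ (pairEquiv N (1, i))))).eval y)

theorem stmt11_general (N : ℕ)
    (ν : Measure ℝ) [IsFiniteMeasure ν]
    (hmom : ∀ k : ℕ, Integrable (fun x => x ^ k) ν)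
    (p : Fin (2*N) → Polynomial ℝ)
    (hmonic : ∀ i, (p i).Monic) (hdeg : ∀ i, (p i).natDegree = (i : ℕ)) :
    (1 / (Nat.factorial N : ℝ)) *
      ∫ l : Fin N → ℝ,
        (∏ q ∈ Finset.univ.filter (fun q : Fin N × Fin N => q.1 < q.2),
          (l q.2 - l q.1)^4) ∂(Measure.pi fun _ => ν) =
    pf (Matrix.of fun m n : Fin (2*N) =>
      ∫ x, ((p m).eval x * (Polynomial.derivative (p n)).eval x
            - (Polynomial.derivative (p m)).eval x * (p n).eval x) ∂ν) := by
  have hint (m n : Fin (2 * N)) :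
      Integrable (fun x => (p m).eval x * (derivative (p n)).eval x) ν := by
    simpa only [eval_mul] using integrable_eval_of_integrable_pow hmom (p m * derivative (p n))
  set A : Matrix (Fin (2 * N)) (Fin (2 * N)) ℝ :=
    Matrix.of fun m n => ∫ x, (p m).eval x * (derivative (p n)).eval x ∂ν
  have hW : (Matrix.of fun m n : Fin (2*N) =>
      ∫ x, ((p m).eval x * (derivative (p n)).eval x
        - (derivative (p m)).eval x * (p n).eval x) ∂ν) = A - A.transpose := by
    ext m n
    rw [Matrix.of_apply,
      integral_sub (hint m n) ((hint n m).congr (.of_forall fun x => mul_comm _ _))]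
    simp_rw [A, Matrix.sub_apply, Matrix.transpose_apply, Matrix.of_apply, mul_comm]
  have hdet (l : Fin N → ℝ) : ∏ q ∈ univ.filter (fun q : Fin N × Fin N => q.1 < q.2),
      (l q.2 - l q.1) ^ 4 = (confluentVandermonde p l).det := by
    rw [det_confluentVandermonde p l hdeg hmonic, prod_filter, Fintype.prod_prod_type]
    simp_rw [← filter_lt_eq_Ioi, prod_filter]
  simp_rw [hdet, integral_det_confluentVandermonde p ν hint, hW, pf_sub_transpose]
  ring

/-- Pfaffian formula for `β = 4`: with
`W = [∫ (p_m(x) p_n'(x) - p_m'(x) p_n(x)) dν(x)]_{m,n=1}^{2N}`,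
`(1/N!) ∫_{ℝ^N} ∏_{m<n} (λ_n - λ_m)^4 dν^N(λ) = Pf W`. -/
theorem stmt11 (N : ℕ) (hN : 1 ≤ N)
    (ν : Measure ℝ) [IsFiniteMeasure ν]
    (hmom : ∀ k : ℕ, Integrable (fun x => x ^ k) ν)
    (p : Fin (2*N) → Polynomial ℝ)
    (hmonic : ∀ i, (p i).Monic) (hdeg : ∀ i, (p i).natDegree = (i : ℕ)) :
    (1 / (Nat.factorial N : ℝ)) *
      ∫ l : Fin N → ℝ,
        (∏ q ∈ Finset.univ.filter (fun q : Fin N × Fin N => q.1 < q.2),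
          (l q.2 - l q.1)^4) ∂(Measure.pi fun _ => ν) =
    pf (Matrix.of fun m n : Fin (2*N) =>
      ∫ x, ((p m).eval x * (Polynomial.derivative (p n)).eval x
            - (Polynomial.derivative (p m)).eval x * (p n).eval x) ∂ν) :=
  stmt11_general N ν hmom p hmonic hdeg
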